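/- arXiv:math/0110308 — 2 statements merged into one kernel-verified Lean document; each statement's English description precedes it below -/
import Mathlib

section
/- Let (f₁, g₁, φ₁) be a contraction from a chain complex N₁ onto M₁ and (f₂, g₂, φ₂) a contraction from N₂ onto M₂ (over a commutative ring R). Then the triple (f₁ ⊗ f₂, g₁ ⊗ g₂, φ₁ ⊗ g₂f₂ + 1_{N₁} ⊗ φ₂) is a contraction from N₁ ⊗ N₂ onto M₁ ⊗ M₂. -/
open scoped DirectSum TensorProduct

noncomputable section

/-- A (non-negatively graded) pre-chain complex of `R`-modules. -/
structure GradedCx (R : Type) [CommRing R] : Type 1 where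
  M : ℕ → Type
  [ab : ∀ n, AddCommGroup (M n)]
  [mod : ∀ n, Module R (M n)]
  d : ∀ n, M (n + 1) →ₗ[R] M n

attribute [instance] GradedCx.ab GradedCx.mod

variable {R : Type} [CommRing R]

/-- `(f, g, φ)` is a contraction from `N` onto `M`. -/
structure IsContraction (N M : GradedCx R)
    (f : ∀ n, N.M n →ₗ[R] M.M n) (g : ∀ n, M.M n →ₗ[R] N.M n)
    (φ : ∀ n, N.M n →ₗ[R] N.M (n + 1)) : Prop where
  f_chain : ∀ n, (f n).comp (N.d n) = (M.d n).comp (f (n + 1))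
  g_chain : ∀ n, (g n).comp (M.d n) = (N.d n).comp (g (n + 1))
  c1 : ∀ n, (f n).comp (g n) = LinearMap.id
  c2_succ : ∀ n, (φ n).comp (N.d n) + (N.d (n + 1)).comp (φ (n + 1))
      + (g (n + 1)).comp (f (n + 1)) = LinearMap.id
  c2_zero : (N.d 0).comp (φ 0) + (g 0).comp (f 0) = LinearMap.id
  c3 : ∀ n, (φ n).comp (g n) = 0
  c4 : ∀ n, (f (n + 1)).comp (φ n) = 0
  c5 : ∀ n, (φ (n + 1)).comp (φ n) = 0

/-- Index set for the degree-`n` part of a tensor product of graded complexes. -/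
def TIdx (n : ℕ) := {p : ℕ × ℕ // p.1 + p.2 = n}

instance (n : ℕ) : DecidableEq (TIdx n) := by unfold TIdx; infer_instance

/-- Degree-`n` part of the tensor product: `⊕_{i+j=n} (N₁)_i ⊗ (N₂)_j`. -/
abbrev tenM (N₁ N₂ : GradedCx R) (n : ℕ) : Type :=
  DirectSum (TIdx n) (fun p => TensorProduct R (N₁.M p.1.1) (N₂.M p.1.2))

/-- The tensor product differential `d ⊗ 1 + (-1)^i (1 ⊗ d)` (Koszul sign). -/
def tenD (N₁ N₂ : GradedCx R) (n : ℕ) : tenM N₁ N₂ (n + 1) →ₗ[R] tenM N₁ N₂ n :=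
  DirectSum.toModule R (TIdx (n + 1)) (tenM N₁ N₂ n) fun p =>
    (match p with
      | ⟨(i + 1, j), h⟩ =>
          (DirectSum.lof R (TIdx n) _ (⟨(i, j), by omega⟩ : TIdx n)).comp
            (TensorProduct.map (N₁.d i) LinearMap.id)
      | ⟨(0, _), _⟩ => 0)
    +
    (match p with
      | ⟨(i, j + 1), h⟩ =>
          ((-1 : ℤ) ^ i) •
            (DirectSum.lof R (TIdx n) _ (⟨(i, j), by omega⟩ : TIdx n)).comp
              (TensorProduct.map LinearMap.id (N₂.d j))
      | ⟨(_, 0), _⟩ => 0)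

/-- The tensor product complex `N₁ ⊗ N₂`. -/
def tenCx (N₁ N₂ : GradedCx R) : GradedCx R where
  M := tenM N₁ N₂
  d := tenD N₁ N₂

/-- The tensor product `F₁ ⊗ F₂` of two degree-`0` families of maps. -/
def tenHom {N₁ N₂ M₁ M₂ : GradedCx R}
    (F₁ : ∀ n, N₁.M n →ₗ[R] M₁.M n) (F₂ : ∀ n, N₂.M n →ₗ[R] M₂.M n) (n : ℕ) :
    tenM N₁ N₂ n →ₗ[R] tenM M₁ M₂ n :=
  DirectSum.toModule R (TIdx n) (tenM M₁ M₂ n) fun p =>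
    (DirectSum.lof R (TIdx n) _ p).comp (TensorProduct.map (F₁ p.1.1) (F₂ p.1.2))

/-- The homotopy operator `φ₁ ⊗ g₂f₂ + 1 ⊗ φ₂` on `N₁ ⊗ N₂` (Koszul sign on the
second summand). -/
def tenHtp {N₁ N₂ M₂ : GradedCx R}
    (φ₁ : ∀ n, N₁.M n →ₗ[R] N₁.M (n + 1))
    (f₂ : ∀ n, N₂.M n →ₗ[R] M₂.M n) (g₂ : ∀ n, M₂.M n →ₗ[R] N₂.M n)
    (φ₂ : ∀ n, N₂.M n →ₗ[R] N₂.M (n + 1)) (n : ℕ) :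
    tenM N₁ N₂ n →ₗ[R] tenM N₁ N₂ (n + 1) :=
  DirectSum.toModule R (TIdx n) (tenM N₁ N₂ (n + 1)) fun p =>
    (DirectSum.lof R (TIdx (n + 1)) _
        (⟨(p.1.1 + 1, p.1.2), by have := p.2; omega⟩ : TIdx (n + 1))).comp
      (TensorProduct.map (φ₁ p.1.1) ((g₂ p.1.2).comp (f₂ p.1.2)))
    + ((-1 : ℤ) ^ p.1.1) •
      (DirectSum.lof R (TIdx (n + 1)) _
          (⟨(p.1.1, p.1.2 + 1), by have := p.2; omega⟩ : TIdx (n + 1))).comp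
        (TensorProduct.map LinearMap.id (φ₂ p.1.2))

section Helpers
variable {R : Type} [CommRing R] {N₁ N₂ M₁ M₂ : GradedCx R}

lemma ten_ext {n : ℕ} {P : Type} [AddCommGroup P] [Module R P]
    {F G : tenM N₁ N₂ n →ₗ[R] P}
    (h : ∀ i j (hij : i + j = n) (x : N₁.M i) (y : N₂.M j),
      F (DirectSum.lof R (TIdx n) _ (⟨(i,j),hij⟩ : TIdx n) (x ⊗ₜ y))
        = G (DirectSum.lof R (TIdx n) _ (⟨(i,j),hij⟩ : TIdx n) (x ⊗ₜ y))) : F = G := by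
  apply DirectSum.linearMap_ext
  rintro ⟨⟨i, j⟩, hij⟩
  apply TensorProduct.ext'
  intro x y
  exact h i j hij x y

lemma tenD_ss (n i j : ℕ) (h : (i+1)+(j+1) = n+1) (h1 : i + (j+1) = n) (h2 : (i+1) + j = n)
    (x : N₁.M (i+1)) (y : N₂.M (j+1)) :
    tenD N₁ N₂ n (DirectSum.lof R (TIdx (n+1)) _ (⟨(i+1,j+1),h⟩ : TIdx (n+1)) (x ⊗ₜ y))
      = DirectSum.lof R (TIdx n) _ (⟨(i,j+1), h1⟩ : TIdx n) (N₁.d i x ⊗ₜ y)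
        + ((-1:ℤ)^(i+1)) • DirectSum.lof R (TIdx n) _ (⟨(i+1,j), h2⟩ : TIdx n) (x ⊗ₜ N₂.d j y) := by
  rw [tenD]; erw [DirectSum.toModule_lof]; simp

lemma tenD_s0 (n i : ℕ) (h : (i+1)+0 = n+1) (h1 : i + 0 = n)
    (x : N₁.M (i+1)) (y : N₂.M 0) :
    tenD N₁ N₂ n (DirectSum.lof R (TIdx (n+1)) _ (⟨(i+1,0),h⟩ : TIdx (n+1)) (x ⊗ₜ y))
      = DirectSum.lof R (TIdx n) _ (⟨(i,0), h1⟩ : TIdx n) (N₁.d i x ⊗ₜ y) := by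
  rw [tenD]; erw [DirectSum.toModule_lof]; simp

lemma tenD_0s (n j : ℕ) (h : 0+(j+1) = n+1) (h1 : 0 + j = n)
    (x : N₁.M 0) (y : N₂.M (j+1)) :
    tenD N₁ N₂ n (DirectSum.lof R (TIdx (n+1)) _ (⟨(0,j+1),h⟩ : TIdx (n+1)) (x ⊗ₜ y))
      = DirectSum.lof R (TIdx n) _ (⟨(0,j), h1⟩ : TIdx n) (x ⊗ₜ N₂.d j y) := by
  rw [tenD]; erw [DirectSum.toModule_lof]; simp

lemma tenHom_lof (F₁ : ∀ n, N₁.M n →ₗ[R] M₁.M n) (F₂ : ∀ n, N₂.M n →ₗ[R] M₂.M n)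
    (n i j : ℕ) (h : i + j = n) (x : N₁.M i) (y : N₂.M j) :
    tenHom F₁ F₂ n (DirectSum.lof R (TIdx n) _ (⟨(i,j),h⟩ : TIdx n) (x ⊗ₜ y))
      = DirectSum.lof R (TIdx n) _ (⟨(i,j),h⟩ : TIdx n) (F₁ i x ⊗ₜ F₂ j y) := by
  rw [tenHom]; erw [DirectSum.toModule_lof]; simp

lemma tenHtp_lof (φ₁ : ∀ n, N₁.M n →ₗ[R] N₁.M (n + 1))
    (f₂ : ∀ n, N₂.M n →ₗ[R] M₂.M n) (g₂ : ∀ n, M₂.M n →ₗ[R] N₂.M n)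
    (φ₂ : ∀ n, N₂.M n →ₗ[R] N₂.M (n + 1))
    (n i j : ℕ) (h : i + j = n) (h1 : (i+1) + j = n+1) (h2 : i + (j+1) = n+1)
    (x : N₁.M i) (y : N₂.M j) :
    tenHtp φ₁ f₂ g₂ φ₂ n (DirectSum.lof R (TIdx n) _ (⟨(i,j),h⟩ : TIdx n) (x ⊗ₜ y))
      = DirectSum.lof R (TIdx (n+1)) _ (⟨(i+1,j),h1⟩ : TIdx (n+1)) (φ₁ i x ⊗ₜ g₂ j (f₂ j y))
        + ((-1:ℤ)^i) • DirectSum.lof R (TIdx (n+1)) _ (⟨(i,j+1),h2⟩ : TIdx (n+1)) (x ⊗ₜ φ₂ j y) := by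
  rw [tenHtp]; erw [DirectSum.toModule_lof]; simp

lemma neg_one_pow_mul_self (k : ℕ) : ((-1:ℤ))^k * (-1)^k = 1 := by
  rw [← pow_add]; exact Even.neg_one_pow ⟨k, rfl⟩

end Helpers
set_option maxHeartbeats 2000000 in
/-- the tensor product of two contractions is a contraction
`(f₁ ⊗ f₂, g₁ ⊗ g₂, φ₁ ⊗ g₂f₂ + 1 ⊗ φ₂)` from `N₁ ⊗ N₂` onto `M₁ ⊗ M₂`. -/
theorem tensor_contraction (N₁ M₁ N₂ M₂ : GradedCx R)
    (hN₁ : ∀ n, (N₁.d n).comp (N₁.d (n + 1)) = 0)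
    (hM₁ : ∀ n, (M₁.d n).comp (M₁.d (n + 1)) = 0)
    (hN₂ : ∀ n, (N₂.d n).comp (N₂.d (n + 1)) = 0)
    (hM₂ : ∀ n, (M₂.d n).comp (M₂.d (n + 1)) = 0)
    (f₁ : ∀ n, N₁.M n →ₗ[R] M₁.M n) (g₁ : ∀ n, M₁.M n →ₗ[R] N₁.M n)
    (φ₁ : ∀ n, N₁.M n →ₗ[R] N₁.M (n + 1))
    (f₂ : ∀ n, N₂.M n →ₗ[R] M₂.M n) (g₂ : ∀ n, M₂.M n →ₗ[R] N₂.M n)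
    (φ₂ : ∀ n, N₂.M n →ₗ[R] N₂.M (n + 1))
    (h₁ : IsContraction N₁ M₁ f₁ g₁ φ₁) (h₂ : IsContraction N₂ M₂ f₂ g₂ φ₂) :
    IsContraction (tenCx N₁ N₂) (tenCx M₁ M₂)
      (tenHom f₁ f₂) (tenHom g₁ g₂) (tenHtp φ₁ f₂ g₂ φ₂) := by
  have fc1 : ∀ n x, f₁ n (N₁.d n x) = M₁.d n (f₁ (n+1) x) :=
    fun n x => LinearMap.congr_fun (h₁.f_chain n) x
  have fc2 : ∀ n x, f₂ n (N₂.d n x) = M₂.d n (f₂ (n+1) x) :=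
    fun n x => LinearMap.congr_fun (h₂.f_chain n) x
  have gc1 : ∀ n x, g₁ n (M₁.d n x) = N₁.d n (g₁ (n+1) x) :=
    fun n x => LinearMap.congr_fun (h₁.g_chain n) x
  have gc2 : ∀ n x, g₂ n (M₂.d n x) = N₂.d n (g₂ (n+1) x) :=
    fun n x => LinearMap.congr_fun (h₂.g_chain n) x
  have c11 : ∀ n x, f₁ n (g₁ n x) = x := fun n x => LinearMap.congr_fun (h₁.c1 n) x
  have c12 : ∀ n x, f₂ n (g₂ n x) = x := fun n x => LinearMap.congr_fun (h₂.c1 n) x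
  have c2s1 : ∀ n x, φ₁ n (N₁.d n x) + N₁.d (n+1) (φ₁ (n+1) x) + g₁ (n+1) (f₁ (n+1) x) = x :=
    fun n x => by simpa using LinearMap.congr_fun (h₁.c2_succ n) x
  have c2s2 : ∀ n x, φ₂ n (N₂.d n x) + N₂.d (n+1) (φ₂ (n+1) x) + g₂ (n+1) (f₂ (n+1) x) = x :=
    fun n x => by simpa using LinearMap.congr_fun (h₂.c2_succ n) x
  have c2z1 : ∀ x, N₁.d 0 (φ₁ 0 x) + g₁ 0 (f₁ 0 x) = x :=
    fun x => by simpa using LinearMap.congr_fun h₁.c2_zero x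
  have c2z2 : ∀ x, N₂.d 0 (φ₂ 0 x) + g₂ 0 (f₂ 0 x) = x :=
    fun x => by simpa using LinearMap.congr_fun h₂.c2_zero x
  have c31 : ∀ n x, φ₁ n (g₁ n x) = 0 := fun n x => LinearMap.congr_fun (h₁.c3 n) x
  have c32 : ∀ n x, φ₂ n (g₂ n x) = 0 := fun n x => LinearMap.congr_fun (h₂.c3 n) x
  have c41 : ∀ n x, f₁ (n+1) (φ₁ n x) = 0 := fun n x => LinearMap.congr_fun (h₁.c4 n) x
  have c42 : ∀ n x, f₂ (n+1) (φ₂ n x) = 0 := fun n x => LinearMap.congr_fun (h₂.c4 n) x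
  have c51 : ∀ n x, φ₁ (n+1) (φ₁ n x) = 0 := fun n x => LinearMap.congr_fun (h₁.c5 n) x
  have c52 : ∀ n x, φ₂ (n+1) (φ₂ n x) = 0 := fun n x => LinearMap.congr_fun (h₂.c5 n) x
  constructor
  -- f_chain
  · intro n
    show (tenHom f₁ f₂ n).comp (tenD N₁ N₂ n) = (tenD M₁ M₂ n).comp (tenHom f₁ f₂ (n+1))
    apply ten_ext
    intro i j hij x y
    simp only [LinearMap.comp_apply]
    rcases i with _ | a <;> rcases j with _ | b
    · exact absurd hij (by omega)
    · rw [tenD_0s n b hij (by omega),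
        tenHom_lof f₁ f₂ n 0 b (by omega),
        tenHom_lof f₁ f₂ (n+1) 0 (b+1) hij,
        tenD_0s n b hij (by omega), fc2]
    · rw [tenD_s0 n a hij (by omega),
        tenHom_lof f₁ f₂ n a 0 (by omega),
        tenHom_lof f₁ f₂ (n+1) (a+1) 0 hij,
        tenD_s0 n a hij (by omega), fc1]
    · rw [tenD_ss n a b hij (by omega) (by omega), map_add, map_zsmul,
        tenHom_lof f₁ f₂ n a (b+1) (by omega),
        tenHom_lof f₁ f₂ n (a+1) b (by omega),
        tenHom_lof f₁ f₂ (n+1) (a+1) (b+1) hij,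
        tenD_ss n a b hij (by omega) (by omega), fc1, fc2]
  -- g_chain
  · intro n
    show (tenHom g₁ g₂ n).comp (tenD M₁ M₂ n) = (tenD N₁ N₂ n).comp (tenHom g₁ g₂ (n+1))
    apply ten_ext
    intro i j hij x y
    simp only [LinearMap.comp_apply]
    rcases i with _ | a <;> rcases j with _ | b
    · exact absurd hij (by omega)
    · rw [tenD_0s n b hij (by omega),
        tenHom_lof g₁ g₂ n 0 b (by omega),
        tenHom_lof g₁ g₂ (n+1) 0 (b+1) hij,
        tenD_0s n b hij (by omega), gc2]
    · rw [tenD_s0 n a hij (by omega),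
        tenHom_lof g₁ g₂ n a 0 (by omega),
        tenHom_lof g₁ g₂ (n+1) (a+1) 0 hij,
        tenD_s0 n a hij (by omega), gc1]
    · rw [tenD_ss n a b hij (by omega) (by omega), map_add, map_zsmul,
        tenHom_lof g₁ g₂ n a (b+1) (by omega),
        tenHom_lof g₁ g₂ n (a+1) b (by omega),
        tenHom_lof g₁ g₂ (n+1) (a+1) (b+1) hij,
        tenD_ss n a b hij (by omega) (by omega), gc1, gc2]
  -- c1
  · intro n
    show (tenHom f₁ f₂ n).comp (tenHom g₁ g₂ n) = LinearMap.id
    apply ten_ext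
    intro i j hij x y
    simp only [LinearMap.comp_apply, LinearMap.id_apply]
    rw [tenHom_lof g₁ g₂ n i j hij, tenHom_lof f₁ f₂ n i j hij, c11, c12]
  -- c2_succ
  · intro n
    show (tenHtp φ₁ f₂ g₂ φ₂ n).comp (tenD N₁ N₂ n)
        + (tenD N₁ N₂ (n+1)).comp (tenHtp φ₁ f₂ g₂ φ₂ (n+1))
        + (tenHom g₁ g₂ (n+1)).comp (tenHom f₁ f₂ (n+1)) = LinearMap.id
    apply ten_ext
    intro i j hij x y
    simp only [LinearMap.comp_apply, LinearMap.add_apply, LinearMap.id_apply]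
    rcases i with _ | a <;> rcases j with _ | b
    · exact absurd hij (by omega)
    -- (0, b+1)
    · rw [tenD_0s n b hij (by omega),
        tenHtp_lof φ₁ f₂ g₂ φ₂ n 0 b (by omega) (by omega) (by omega),
        tenHtp_lof φ₁ f₂ g₂ φ₂ (n+1) 0 (b+1) hij (by omega) (by omega),
        map_add, map_zsmul,
        tenD_ss (n+1) 0 b (by omega) (by omega) (by omega),
        tenD_0s (n+1) (b+1) (by omega) (by omega),
        tenHom_lof f₁ f₂ (n+1) 0 (b+1) hij,
        tenHom_lof g₁ g₂ (n+1) 0 (b+1) hij]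
      have Hb : g₂ b (f₂ b (N₂.d b y)) = N₂.d b (g₂ (b+1) (f₂ (b+1) y)) := by
        rw [fc2, gc2]
      rw [Hb]
      have Hy : (x ⊗ₜ[R] y : N₁.M 0 ⊗[R] N₂.M (b+1))
          = x ⊗ₜ φ₂ b (N₂.d b y) + x ⊗ₜ N₂.d (b+1) (φ₂ (b+1) y)
            + x ⊗ₜ g₂ (b+1) (f₂ (b+1) y) := by
        conv_lhs => rw [← c2s2 b y]
        rw [TensorProduct.tmul_add, TensorProduct.tmul_add]
      have Hx : (x ⊗ₜ[R] g₂ (b+1) (f₂ (b+1) y) : N₁.M 0 ⊗[R] N₂.M (b+1))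
          = N₁.d 0 (φ₁ 0 x) ⊗ₜ g₂ (b+1) (f₂ (b+1) y)
            + g₁ 0 (f₁ 0 x) ⊗ₜ g₂ (b+1) (f₂ (b+1) y) := by
        conv_lhs => rw [← c2z1 x]
        rw [TensorProduct.add_tmul]
      rw [Hy, Hx]
      simp only [map_add, smul_add, smul_smul, neg_one_pow_mul_self, one_smul]
      simp only [pow_succ, pow_zero, mul_neg, mul_one, neg_smul, smul_neg, neg_neg, one_smul]
      abel
    -- (a+1, 0)
    · rw [tenD_s0 n a hij (by omega),
        tenHtp_lof φ₁ f₂ g₂ φ₂ n a 0 (by omega) (by omega) (by omega),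
        tenHtp_lof φ₁ f₂ g₂ φ₂ (n+1) (a+1) 0 hij (by omega) (by omega),
        map_add, map_zsmul,
        tenD_s0 (n+1) (a+1) (by omega) (by omega),
        tenD_ss (n+1) a 0 (by omega) (by omega) (by omega),
        tenHom_lof f₁ f₂ (n+1) (a+1) 0 hij,
        tenHom_lof g₁ g₂ (n+1) (a+1) 0 hij]
      have Hy : (x ⊗ₜ[R] y : N₁.M (a+1) ⊗[R] N₂.M 0)
          = x ⊗ₜ N₂.d 0 (φ₂ 0 y) + x ⊗ₜ g₂ 0 (f₂ 0 y) := by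
        conv_lhs => rw [← c2z2 y]
        rw [TensorProduct.tmul_add]
      have Hx : (x ⊗ₜ[R] g₂ 0 (f₂ 0 y) : N₁.M (a+1) ⊗[R] N₂.M 0)
          = φ₁ a (N₁.d a x) ⊗ₜ g₂ 0 (f₂ 0 y)
            + N₁.d (a+1) (φ₁ (a+1) x) ⊗ₜ g₂ 0 (f₂ 0 y)
            + g₁ (a+1) (f₁ (a+1) x) ⊗ₜ g₂ 0 (f₂ 0 y) := by
        conv_lhs => rw [← c2s1 a x]
        rw [TensorProduct.add_tmul, TensorProduct.add_tmul]
      rw [Hy, Hx]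
      simp only [map_add, smul_add, smul_smul, neg_one_pow_mul_self, one_smul]
      simp only [pow_succ, pow_zero, mul_neg, mul_one, neg_smul, smul_neg, neg_neg, one_smul]
      abel
    -- (a+1, b+1)
    · rw [tenD_ss n a b hij (by omega) (by omega), map_add, map_zsmul,
        tenHtp_lof φ₁ f₂ g₂ φ₂ n a (b+1) (by omega) (by omega) (by omega),
        tenHtp_lof φ₁ f₂ g₂ φ₂ n (a+1) b (by omega) (by omega) (by omega),
        tenHtp_lof φ₁ f₂ g₂ φ₂ (n+1) (a+1) (b+1) hij (by omega) (by omega),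
        map_add, map_zsmul,
        tenD_ss (n+1) (a+1) b (by omega) (by omega) (by omega),
        tenD_ss (n+1) a (b+1) (by omega) (by omega) (by omega),
        tenHom_lof f₁ f₂ (n+1) (a+1) (b+1) hij,
        tenHom_lof g₁ g₂ (n+1) (a+1) (b+1) hij]
      have Hb : g₂ b (f₂ b (N₂.d b y)) = N₂.d b (g₂ (b+1) (f₂ (b+1) y)) := by
        rw [fc2, gc2]
      rw [Hb]
      have Hy : (x ⊗ₜ[R] y : N₁.M (a+1) ⊗[R] N₂.M (b+1))
          = x ⊗ₜ φ₂ b (N₂.d b y) + x ⊗ₜ N₂.d (b+1) (φ₂ (b+1) y)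
            + x ⊗ₜ g₂ (b+1) (f₂ (b+1) y) := by
        conv_lhs => rw [← c2s2 b y]
        rw [TensorProduct.tmul_add, TensorProduct.tmul_add]
      have Hx : (x ⊗ₜ[R] g₂ (b+1) (f₂ (b+1) y) : N₁.M (a+1) ⊗[R] N₂.M (b+1))
          = φ₁ a (N₁.d a x) ⊗ₜ g₂ (b+1) (f₂ (b+1) y)
            + N₁.d (a+1) (φ₁ (a+1) x) ⊗ₜ g₂ (b+1) (f₂ (b+1) y)
            + g₁ (a+1) (f₁ (a+1) x) ⊗ₜ g₂ (b+1) (f₂ (b+1) y) := by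
        conv_lhs => rw [← c2s1 a x]
        rw [TensorProduct.add_tmul, TensorProduct.add_tmul]
      rw [Hy, Hx]
      simp only [map_add, smul_add, smul_smul, neg_one_pow_mul_self, one_smul]
      simp only [pow_succ, pow_zero, mul_neg, mul_one, neg_smul, smul_neg, neg_neg, one_smul]
      abel
  -- c2_zero
  · show (tenD N₁ N₂ 0).comp (tenHtp φ₁ f₂ g₂ φ₂ 0)
        + (tenHom g₁ g₂ 0).comp (tenHom f₁ f₂ 0) = LinearMap.id
    apply ten_ext
    intro i j hij x y
    simp only [LinearMap.comp_apply, LinearMap.add_apply, LinearMap.id_apply]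
    rcases i with _ | a
    · rcases j with _ | b
      · rw [tenHtp_lof φ₁ f₂ g₂ φ₂ 0 0 0 hij (by omega) (by omega),
          map_add, map_zsmul,
          tenD_s0 0 0 (by omega) (by omega),
          tenD_0s 0 0 (by omega) (by omega),
          tenHom_lof f₁ f₂ 0 0 0 hij, tenHom_lof g₁ g₂ 0 0 0 hij]
        have Hy : (x ⊗ₜ[R] y : N₁.M 0 ⊗[R] N₂.M 0)
            = x ⊗ₜ N₂.d 0 (φ₂ 0 y) + x ⊗ₜ g₂ 0 (f₂ 0 y) := by
          conv_lhs => rw [← c2z2 y]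
          rw [TensorProduct.tmul_add]
        have Hx : (x ⊗ₜ[R] g₂ 0 (f₂ 0 y) : N₁.M 0 ⊗[R] N₂.M 0)
            = N₁.d 0 (φ₁ 0 x) ⊗ₜ g₂ 0 (f₂ 0 y)
              + g₁ 0 (f₁ 0 x) ⊗ₜ g₂ 0 (f₂ 0 y) := by
          conv_lhs => rw [← c2z1 x]
          rw [TensorProduct.add_tmul]
        rw [Hy, Hx]
        simp only [map_add, pow_zero, one_smul]
        abel
      · exact absurd hij (by omega)
    · exact absurd hij (by omega)
  -- c3
  · intro n
    show (tenHtp φ₁ f₂ g₂ φ₂ n).comp (tenHom g₁ g₂ n) = 0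
    apply ten_ext
    intro i j hij x y
    simp only [LinearMap.comp_apply, LinearMap.zero_apply]
    rw [tenHom_lof g₁ g₂ n i j hij,
      tenHtp_lof φ₁ f₂ g₂ φ₂ n i j hij (by omega) (by omega), c31, c32]
    simp
  -- c4
  · intro n
    show (tenHom f₁ f₂ (n+1)).comp (tenHtp φ₁ f₂ g₂ φ₂ n) = 0
    apply ten_ext
    intro i j hij x y
    simp only [LinearMap.comp_apply, LinearMap.zero_apply]
    rw [tenHtp_lof φ₁ f₂ g₂ φ₂ n i j hij (by omega) (by omega), map_add, map_zsmul,
      tenHom_lof f₁ f₂ (n+1) (i+1) j (by omega),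
      tenHom_lof f₁ f₂ (n+1) i (j+1) (by omega), c41, c42]
    simp
  -- c5
  · intro n
    show (tenHtp φ₁ f₂ g₂ φ₂ (n+1)).comp (tenHtp φ₁ f₂ g₂ φ₂ n) = 0
    apply ten_ext
    intro i j hij x y
    simp only [LinearMap.comp_apply, LinearMap.zero_apply]
    rw [tenHtp_lof φ₁ f₂ g₂ φ₂ n i j hij (by omega) (by omega), map_add, map_zsmul,
      tenHtp_lof φ₁ f₂ g₂ φ₂ (n+1) (i+1) j (by omega) (by omega) (by omega),
      tenHtp_lof φ₁ f₂ g₂ φ₂ (n+1) i (j+1) (by omega) (by omega) (by omega),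
      c51, c32, c42, c52]
    simp
end
end

section
/- With notation as in the combinatorial formula for Steenrod squares (n = j − i = k, m = i + j), the total number of summands in the formula for Sq^i(c), for c a cochain of degree j = i + k, is at most (i+1)^n; consequently, since each summand contains m − n = 2i face operators, the total number of face operators occurring in the formula is at most 2i(i+1)^k, i.e., O(i^{k+1}). -/
/-- The lower bound `S(ℓ)` of the summation index `i_ℓ` in the combinatorial
formula for Steenrod squares. -/
def steenrodLowerBound (n m : ℕ) (i : ℕ → ℤ) (ℓ : ℕ) : ℤ :=
  (∑ r ∈ Finset.Icc (ℓ + 1) n, (-1 : ℤ) ^ (r + ℓ + 1) * i r)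
    + (-1 : ℤ) ^ (ℓ + n) * (((m + 1) / 2 : ℕ) : ℤ) + ((ℓ / 2 : ℕ) : ℤ)

/-- Extend a tuple `(i₀, i₁, …, i_n) : Fin (n+1) → ℤ` to a function `ℕ → ℤ`. -/
def tupleExt (n : ℕ) (v : Fin (n + 1) → ℤ) (r : ℕ) : ℤ :=
  if h : r < n + 1 then v ⟨r, h⟩ else 0

lemma slb_rec (n m : ℕ) (f : ℕ → ℤ) (ℓ : ℕ) (h : ℓ < n) :
    steenrodLowerBound n m f ℓ = f (ℓ+1) + ℓ - steenrodLowerBound n m f (ℓ+1) := by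
  unfold steenrodLowerBound
  have hins : Finset.Icc (ℓ+1) n = insert (ℓ+1) (Finset.Icc (ℓ+2) n) := by
    ext r; simp [Finset.mem_Icc]; omega
  have hnm : (ℓ+1) ∉ Finset.Icc (ℓ+2) n := by simp
  rw [hins, Finset.sum_insert hnm]
  have h1 : ((-1:ℤ))^(ℓ+1+ℓ+1) = 1 := by
    have : ℓ+1+ℓ+1 = 2*(ℓ+1) := by omega
    rw [this, pow_mul]; norm_num
  have h2 : ∀ r, ((-1:ℤ))^(r+ℓ+1) = -((-1:ℤ))^(r+(ℓ+1)+1) := by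
    intro r
    have : r+(ℓ+1)+1 = (r+ℓ+1)+1 := by omega
    rw [this, pow_succ]; ring
  have h3 : ((-1:ℤ))^(ℓ+n) = -((-1:ℤ))^(ℓ+1+n) := by
    have : ℓ+1+n = (ℓ+n)+1 := by omega
    rw [this, pow_succ]; ring
  have h4 : ((ℓ/2 : ℕ) : ℤ) + (((ℓ+1)/2 : ℕ) : ℤ) = (ℓ : ℤ) := by
    have : ℓ/2 + (ℓ+1)/2 = ℓ := by omega
    omega
  have h5 : ∑ r ∈ Finset.Icc (ℓ+2) n, ((-1:ℤ))^(r+ℓ+1) * f r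
      = -∑ r ∈ Finset.Icc ((ℓ+1)+1) n, ((-1:ℤ))^(r+(ℓ+1)+1) * f r := by
    rw [← Finset.sum_neg_distrib]
    exact Finset.sum_congr rfl fun r _ => by rw [h2 r]; ring
  rw [h1, h5, h3]
  linarith [h4]

lemma slb_top (n i : ℕ) (f : ℕ → ℤ) :
    steenrodLowerBound n (2*i+n) f n = (i : ℤ) + n := by
  unfold steenrodLowerBound
  rw [Finset.Icc_eq_empty (by omega), Finset.sum_empty]
  have h1 : ((-1:ℤ))^(n+n) = 1 := by
    have : n+n = 2*n := by omega
    rw [this, pow_mul]; norm_num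
  rw [h1]
  have : (2*i+n+1)/2 + n/2 = i + n := by omega
  omega

lemma key_upper (n i : ℕ) (f : ℕ → ℤ)
    (h2 : steenrodLowerBound n (2*i+n) f n ≤ f n)
    (h3 : f n ≤ ((2*i+n : ℕ) : ℤ))
    (h4 : ∀ ℓ : ℕ, 1 ≤ ℓ → ℓ < n →
      steenrodLowerBound n (2*i+n) f ℓ ≤ f ℓ ∧ f ℓ ≤ f (ℓ+1) - 1) :
    ∀ d ℓ : ℕ, n - ℓ = d → 1 ≤ ℓ → ℓ ≤ n →
      f ℓ - steenrodLowerBound n (2*i+n) f ℓ ≤ i := by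
  intro d
  induction d using Nat.strong_induction_on with
  | _ d IH =>
    intro ℓ hd h1 hn
    rcases eq_or_lt_of_le hn with rfl | hlt
    · rw [slb_top]; push_cast at h3 ⊢; linarith
    · rcases eq_or_lt_of_le (Nat.succ_le_of_lt hlt) with heq | hlt2
      · -- ℓ + 1 = n
        subst heq
        have hrec := slb_rec (ℓ+1) (2*i+(ℓ+1)) f ℓ hlt
        have hle := (h4 ℓ h1 hlt).2
        have htop := slb_top (ℓ+1) i f
        push_cast at htop hrec ⊢
        linarith
      · -- ℓ + 2 ≤ n
        have hrec := slb_rec n (2*i+n) f ℓ hlt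
        have hrec2 := slb_rec n (2*i+n) f (ℓ+1) (by omega)
        have hIH := IH (n - (ℓ+2)) (by omega) (ℓ+2) rfl (by omega) (by omega)
        have hle := (h4 ℓ h1 hlt).2
        push_cast at hrec hrec2 ⊢
        linarith

lemma key_inj (n i : ℕ) (f g : ℕ → ℤ)
    (ht : ∀ ℓ, 1 ≤ ℓ → ℓ ≤ n →
      f ℓ - steenrodLowerBound n (2*i+n) f ℓ = g ℓ - steenrodLowerBound n (2*i+n) g ℓ) :
    ∀ d ℓ, n - ℓ = d → 1 ≤ ℓ → ℓ ≤ n →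
      f ℓ = g ℓ ∧ steenrodLowerBound n (2*i+n) f ℓ = steenrodLowerBound n (2*i+n) g ℓ := by
  intro d
  induction d using Nat.strong_induction_on with
  | _ d IH =>
    intro ℓ hd h1 hn
    rcases eq_or_lt_of_le hn with rfl | hlt
    · have hs : steenrodLowerBound ℓ (2*i+ℓ) f ℓ = steenrodLowerBound ℓ (2*i+ℓ) g ℓ := by
        rw [slb_top, slb_top]
      have := ht ℓ h1 le_rfl
      exact ⟨by linarith [hs, this], hs⟩
    · have hrecf := slb_rec n (2*i+n) f ℓ hlt
      have hrecg := slb_rec n (2*i+n) g ℓ hlt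
      have hIH := IH (n - (ℓ+1)) (by omega) (ℓ+1) rfl (by omega) (by omega)
      have hs : steenrodLowerBound n (2*i+n) f ℓ = steenrodLowerBound n (2*i+n) g ℓ := by
        rw [hrecf, hrecg, hIH.1, hIH.2]
      have := ht ℓ h1 (le_of_lt hlt)
      exact ⟨by linarith, hs⟩

def sP (i n : ℕ) (v : Fin (n + 1) → ℤ) : Prop :=
  tupleExt n v 0 = steenrodLowerBound n (2*i+n) (tupleExt n v) 0 ∧
  steenrodLowerBound n (2*i+n) (tupleExt n v) n ≤ tupleExt n v n ∧
  tupleExt n v n ≤ ((2*i+n : ℕ) : ℤ) ∧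
  (∀ ℓ : ℕ, 1 ≤ ℓ → ℓ < n →
    steenrodLowerBound n (2*i+n) (tupleExt n v) ℓ ≤ tupleExt n v ℓ ∧
      tupleExt n v ℓ ≤ tupleExt n v (ℓ + 1) - 1)

lemma sP_inj (i n : ℕ) :
    ∃ F : {v : Fin (n + 1) → ℤ // sP i n v} → (Fin n → Fin (i + 1)),
      Function.Injective F := by
  have hbd : ∀ (v : Fin (n+1) → ℤ), sP i n v → ∀ ℓ, 1 ≤ ℓ → ℓ ≤ n →
      0 ≤ tupleExt n v ℓ - steenrodLowerBound n (2*i+n) (tupleExt n v) ℓ ∧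
      tupleExt n v ℓ - steenrodLowerBound n (2*i+n) (tupleExt n v) ℓ ≤ i := by
    intro v hv ℓ h1 hn
    obtain ⟨hv0, hv1, hv2, hv3⟩ := hv
    constructor
    · rcases eq_or_lt_of_le hn with rfl | hlt
      · linarith
      · linarith [(hv3 ℓ h1 hlt).1]
    · exact key_upper n i (tupleExt n v) hv1 hv2 hv3 (n - ℓ) ℓ rfl h1 hn
  refine ⟨fun x j => ⟨(tupleExt n x.1 (j.1+1)
      - steenrodLowerBound n (2*i+n) (tupleExt n x.1) (j.1+1)).toNat, ?_⟩, ?_⟩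
  · have := hbd x.1 x.2 (j.1+1) (by omega) (by omega)
    omega
  · intro x y hxy
    have ht : ∀ ℓ, 1 ≤ ℓ → ℓ ≤ n →
        tupleExt n x.1 ℓ - steenrodLowerBound n (2*i+n) (tupleExt n x.1) ℓ
          = tupleExt n y.1 ℓ - steenrodLowerBound n (2*i+n) (tupleExt n y.1) ℓ := by
      intro ℓ h1 hn'
      have hj : ℓ - 1 < n := by omega
      have h' := congrArg Fin.val (congrFun hxy ⟨ℓ-1, hj⟩)
      simp only [Fin.val_mk] at h'
      have e1 := (hbd x.1 x.2 ℓ h1 hn').1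
      have e2 := (hbd y.1 y.2 ℓ h1 hn').1
      have hℓ : ℓ - 1 + 1 = ℓ := by omega
      rw [hℓ] at h'
      omega
    have hmain := key_inj n i (tupleExt n x.1) (tupleExt n y.1) ht
    apply Subtype.ext
    funext j
    have hx : tupleExt n x.1 j.1 = x.1 j := dif_pos j.2
    have hy : tupleExt n y.1 j.1 = y.1 j := dif_pos j.2
    rw [← hx, ← hy]
    rcases Nat.eq_zero_or_pos j.1 with h0 | h1
    · rw [h0]
      have hx0 := x.2.1
      have hy0 := y.2.1
      have hs : steenrodLowerBound n (2*i+n) (tupleExt n x.1) 0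
          = steenrodLowerBound n (2*i+n) (tupleExt n y.1) 0 := by
        rcases Nat.eq_zero_or_pos n with hn0 | hn1
        · subst hn0
          rw [slb_top 0 i, slb_top 0 i]
        · have h := hmain (n-1) 1 rfl le_rfl hn1
          rw [slb_rec n (2*i+n) _ 0 hn1, slb_rec n (2*i+n) _ 0 hn1, h.1, h.2]
      rw [hx0, hy0, hs]
    · exact (hmain (n - j.1) j.1 rfl h1 (by omega)).1

lemma sP_card (i n : ℕ) :
    Nat.card {v : Fin (n + 1) → ℤ // sP i n v} ≤ (i + 1) ^ n := by
  obtain ⟨F, hF⟩ := sP_inj i n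
  calc Nat.card {v : Fin (n + 1) → ℤ // sP i n v}
      ≤ Nat.card (Fin n → Fin (i + 1)) := Nat.card_le_card_of_injective F hF
    _ = (i + 1) ^ n := by simp [Nat.card_eq_fintype_card]

/-- for `n = k`, `m = i + j = 2i + k`, the set of index tuples
`(i₁, …, i_n)` (together with the determined `i₀ = S(0)`) appearing in the
combinatorial formula for `Sq^i` on a cochain of degree `j = i + k` is finite,
of cardinality at most `(i+1)^n`; consequently, since each summand carries
`m - n = 2i` face operators, the total number of face operators in the formula
is at most `2i(i+1)^k`. -/
theorem steenrod_formula_summand_count (i k : ℕ) :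
    ∀ (n m : ℕ), n = k → m = 2 * i + k →
    (({v : Fin (n + 1) → ℤ |
        tupleExt n v 0 = steenrodLowerBound n m (tupleExt n v) 0 ∧
        steenrodLowerBound n m (tupleExt n v) n ≤ tupleExt n v n ∧
        tupleExt n v n ≤ (m : ℤ) ∧
        (∀ ℓ : ℕ, 1 ≤ ℓ → ℓ < n →
          steenrodLowerBound n m (tupleExt n v) ℓ ≤ tupleExt n v ℓ ∧
            tupleExt n v ℓ ≤ tupleExt n v (ℓ + 1) - 1)} : Set (Fin (n + 1) → ℤ)).Finite)
    ∧ Nat.card {v : Fin (n + 1) → ℤ //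
        tupleExt n v 0 = steenrodLowerBound n m (tupleExt n v) 0 ∧
        steenrodLowerBound n m (tupleExt n v) n ≤ tupleExt n v n ∧
        tupleExt n v n ≤ (m : ℤ) ∧
        (∀ ℓ : ℕ, 1 ≤ ℓ → ℓ < n →
          steenrodLowerBound n m (tupleExt n v) ℓ ≤ tupleExt n v ℓ ∧
            tupleExt n v ℓ ≤ tupleExt n v (ℓ + 1) - 1)} ≤ (i + 1) ^ n
    ∧ (m - n) * Nat.card {v : Fin (n + 1) → ℤ //
        tupleExt n v 0 = steenrodLowerBound n m (tupleExt n v) 0 ∧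
        steenrodLowerBound n m (tupleExt n v) n ≤ tupleExt n v n ∧
        tupleExt n v n ≤ (m : ℤ) ∧
        (∀ ℓ : ℕ, 1 ≤ ℓ → ℓ < n →
          steenrodLowerBound n m (tupleExt n v) ℓ ≤ tupleExt n v ℓ ∧
            tupleExt n v ℓ ≤ tupleExt n v (ℓ + 1) - 1)} ≤ 2 * i * (i + 1) ^ k := by
  intro n m hn hm
  subst hn
  have hm' : m = 2 * i + n := hm
  subst hm'
  obtain ⟨F, hF⟩ := sP_inj i n
  have hfin : Finite {v : Fin (n + 1) → ℤ // sP i n v} := Finite.of_injective F hF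
  have hcard := sP_card i n
  refine ⟨?_, hcard, ?_⟩
  · exact Set.finite_coe_iff.mp hfin
  · have h1 : 2 * i + n - n = 2 * i := by omega
    rw [h1]
    exact Nat.mul_le_mul_left (2 * i) hcard
end
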